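/- arXiv:2010.13199 — 2 statements merged into one kernel-verified Lean document; each statement's English description precedes it below -/
import Mathlib

section
/- Let M = [a,b) and N = [c,d) be interval modules (0 ≤ a < b, 0 ≤ c < d) with (a,b) ≠ (c,d), and let D = min{ max{|a−c|,|b−d|}, max{(b−a)/2,(d−c)/2} }. Then D > 0 and there exists a D-interleaving between M and N; that is, the interleaving distance between two distinct interval modules is attained. -/
open scoped NNReal

/-- A persistence module: a functor from `[0,∞)` to real vector spaces. -/
structure PM where
  V : ℝ≥0 → Type
  [grp : ∀ x, AddCommGroup (V x)]
  [mod : ∀ x, Module ℝ (V x)]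
  map : ∀ {x y : ℝ≥0}, x ≤ y → (V x →ₗ[ℝ] V y)
  map_id : ∀ x : ℝ≥0, map (le_refl x) = LinearMap.id
  map_comp : ∀ {x y z : ℝ≥0} (h1 : x ≤ y) (h2 : y ≤ z),
    (map h2).comp (map h1) = map (h1.trans h2)

attribute [instance] PM.grp PM.mod

/-- A morphism of persistence modules. -/
structure PM.Hom (M N : PM) where
  app : ∀ x : ℝ≥0, M.V x →ₗ[ℝ] N.V x
  comm : ∀ {x y : ℝ≥0} (h : x ≤ y), (app y).comp (M.map h) = (N.map h).comp (app x)

/-- The shifted module `M·ε`. -/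
def PM.shift (M : PM) (ε : ℝ≥0) : PM where
  V x := M.V (x + ε)
  grp x := inferInstance
  mod x := inferInstance
  map h := M.map (add_le_add h (le_refl ε))
  map_id x := M.map_id (x + ε)
  map_comp h1 h2 := M.map_comp _ _

noncomputable def intervalSub (α β : ℝ) (x : ℝ≥0) : Submodule ℝ ℝ :=
  if α ≤ (x : ℝ) ∧ (x : ℝ) < β then ⊤ else ⊥

/-- The interval module `[α,β)`. -/
noncomputable def intervalModule (α β : ℝ) : PM where
  V x := ↥(intervalSub α β x)
  grp x := inferInstance
  mod x := inferInstance
  map {x y} h := LinearMap.codRestrict _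
      ((if α ≤ (x : ℝ) ∧ (y : ℝ) < β then (1 : ℝ) else 0) • (intervalSub α β x).subtype)
      (by
        intro v
        by_cases hy : α ≤ (y : ℝ) ∧ (y : ℝ) < β
        · simp [intervalSub, hy]
        · have hc : ¬(α ≤ (x : ℝ) ∧ (y : ℝ) < β) := by
            intro hc
            exact hy ⟨le_trans hc.1 (by exact_mod_cast h), hc.2⟩
          rw [if_neg hc, zero_smul, LinearMap.zero_apply]
          exact Submodule.zero_mem _)
  map_id x := by
    ext v
    by_cases hx : α ≤ (x : ℝ) ∧ (x : ℝ) < β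
    · simp [hx]
    · have hv : (v : ℝ) = 0 := by
        have h2 := v.2
        simp only [intervalSub, if_neg hx, Submodule.mem_bot] at h2
        exact h2
      simp [hx, hv]
  map_comp {x y z} h1 h2 := by
    ext v
    by_cases hC : α ≤ (x : ℝ) ∧ (z : ℝ) < β
    · have hA : α ≤ (x : ℝ) ∧ (y : ℝ) < β :=
        ⟨hC.1, lt_of_le_of_lt (by exact_mod_cast h2) hC.2⟩
      have hB : α ≤ (y : ℝ) ∧ (z : ℝ) < β :=
        ⟨le_trans hC.1 (by exact_mod_cast h1), hC.2⟩
      simp [hA, hB, hC]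
    · rcases not_and_or.mp hC with hx | hz
      · have hA : ¬(α ≤ (x : ℝ) ∧ (y : ℝ) < β) := fun h => hx h.1
        simp [hA, hC]
        split_ifs <;> simp
      · have hB : ¬(α ≤ (y : ℝ) ∧ (z : ℝ) < β) := fun h => hz h.2
        simp [hB, hC]

/-- `Hom(M,N) ≠ {0}`: there is a nonzero morphism from `M` to `N`. -/
def HomNeZero (M N : PM) : Prop := ∃ F : PM.Hom M N, ∃ x, F.app x ≠ 0

/-- `S_{M,N} = {x ≥ 0 : Hom(M, N·x) ≠ {0}}`. -/
noncomputable def Sset (M N : PM) : Set ℝ :=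
  {x : ℝ | 0 ≤ x ∧ HomNeZero M (N.shift x.toNNReal)}

/-- The canonical morphism `Π_M^{M·τ} : M → M·τ`. -/
def PM.pi (M : PM) (τ : ℝ≥0) : M.Hom (M.shift τ) where
  app x := M.map le_self_add
  comm {x y} h := by
    show (M.map le_self_add).comp (M.map h) =
      (M.map (add_le_add h (le_refl τ))).comp (M.map le_self_add)
    rw [M.map_comp, M.map_comp]

/-- The pair `(Φ, Ψ)` is an `ε`-interleaving between `M` and `N`:
`(Ψ·ε) ∘ Φ = Π_M^{M·2ε}` and `(Φ·ε) ∘ Ψ = Π_N^{N·2ε}` (expressed pointwise). -/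
def IsInterleaving (M N : PM) (ε : ℝ≥0)
    (Φ : M.Hom (N.shift ε)) (Ψ : N.Hom (M.shift ε)) : Prop :=
  (∀ x : ℝ≥0, (Ψ.app (x + ε)).comp (Φ.app x) =
      M.map (le_self_add.trans le_self_add : x ≤ x + ε + ε)) ∧
  (∀ x : ℝ≥0, (Φ.app (x + ε)).comp (Ψ.app x) =
      N.map (le_self_add.trans le_self_add : x ≤ x + ε + ε))

/-! Two cases, according to which term realises the minimum `D`. If both endpoints move by at
most `D`, the maps that are the identity on the overlap of `[a,b)` with `[c-D,d-D)` (and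
symmetrically) compose to the structure maps `x ≤ x + 2D`. If both intervals have length at
most `2D`, those structure maps vanish, so the zero morphisms already form a `D`-interleaving. -/

instance PM.Hom.instZero (M N : PM) : Zero (M.Hom N) :=
  ⟨{ app := 0, comm := fun _ => by simp }⟩

lemma isInterleaving_zero {M N : PM} {ε : ℝ≥0}
    (hM : ∀ x : ℝ≥0, M.map (le_self_add.trans le_self_add : x ≤ x + ε + ε) = 0)
    (hN : ∀ x : ℝ≥0, N.map (le_self_add.trans le_self_add : x ≤ x + ε + ε) = 0) :
    IsInterleaving M N ε 0 0 :=
  ⟨fun x => by rw [hM]; exact LinearMap.comp_zero _,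
    fun x => by rw [hN]; exact LinearMap.comp_zero _⟩

lemma intervalSub_eq_top {α β : ℝ} {x : ℝ≥0} (hx : α ≤ (x : ℝ) ∧ (x : ℝ) < β) :
    intervalSub α β x = ⊤ :=
  if_pos hx

lemma intervalSub_le_shift {α β γ δ : ℝ} {ε x : ℝ≥0} (hγ : γ ≤ α + ε)
    (hx : α ≤ (x : ℝ) ∧ (x : ℝ) + ε < δ) :
    intervalSub α β x ≤ intervalSub γ δ (x + ε) := by
  rw [intervalSub_eq_top (x := x + ε) (by push_cast; exact ⟨by linarith [hx.1], hx.2⟩)]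
  exact le_top

namespace intervalModule

variable {α β γ δ : ℝ}

lemma map_apply_val {x y : ℝ≥0} (h : x ≤ y) (v : (intervalModule α β).V x) :
    ((intervalModule α β).map h v).1 = if α ≤ (x : ℝ) ∧ (y : ℝ) < β then v.1 else 0 :=
  boole_mul _ _

lemma shift_map_apply_val (ε : ℝ≥0) {x y : ℝ≥0} (h : x ≤ y)
    (v : ((intervalModule α β).shift ε).V x) :
    (((intervalModule α β).shift ε).map h v).1 =
      if α ≤ (x : ℝ) + ε ∧ (y : ℝ) + ε < β then v.1 else 0 := by
  rw [← NNReal.coe_add, ← NNReal.coe_add]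
  exact boole_mul _ _

lemma map_eq_zero {x y : ℝ≥0} (h : x ≤ y) (hxy : ¬(α ≤ (x : ℝ) ∧ (y : ℝ) < β)) :
    (intervalModule α β).map h = 0 := by
  ext v
  exact Subtype.ext ((map_apply_val h v).trans (if_neg hxy))

lemma map_add_add_eq_zero {ε : ℝ≥0} (h : β ≤ α + 2 * ε) (x : ℝ≥0) :
    (intervalModule α β).map (le_self_add.trans le_self_add : x ≤ x + ε + ε) = 0 :=
  map_eq_zero _ fun ⟨hαx, hxβ⟩ => by push_cast at hxβ; linarith

noncomputable def toShiftApp (ε : ℝ≥0) (hγ : γ ≤ α + ε) (x : ℝ≥0) :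
    (intervalModule α β).V x →ₗ[ℝ] ((intervalModule γ δ).shift ε).V x :=
  if hx : α ≤ (x : ℝ) ∧ (x : ℝ) + ε < δ then Submodule.inclusion (intervalSub_le_shift hγ hx)
  else 0

lemma toShiftApp_apply_val (ε : ℝ≥0) (hγ : γ ≤ α + ε) (x : ℝ≥0) (v : (intervalModule α β).V x) :
    (toShiftApp ε hγ x v : ((intervalModule γ δ).shift ε).V x).1 =
      if α ≤ (x : ℝ) ∧ (x : ℝ) + ε < δ then v.1 else 0 := by
  by_cases hx : α ≤ (x : ℝ) ∧ (x : ℝ) + ε < δ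
  · simp only [toShiftApp, hx, and_self, ↓reduceDIte, ↓reduceIte]
    rfl
  · simp only [toShiftApp, hx, ↓reduceDIte, ↓reduceIte]
    rfl

/-- The morphism `[α,β) → [γ,δ)·ε = [γ-ε,δ-ε)` that is the identity on the overlap
`[α,δ-ε)`; it is natural exactly because `γ-ε ≤ α` and `δ-ε ≤ β`. -/
noncomputable def toShift (ε : ℝ≥0) (hγ : γ ≤ α + ε) (hδ : δ ≤ β + ε) :
    (intervalModule α β).Hom ((intervalModule γ δ).shift ε) where
  app := toShiftApp ε hγ
  comm {x y} h := by
    have hxy : (x : ℝ) ≤ y := h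
    ext v
    apply Subtype.ext
    rw [LinearMap.comp_apply, LinearMap.comp_apply, toShiftApp_apply_val, map_apply_val]
    rw [shift_map_apply_val, toShiftApp_apply_val, ← ite_and, ← ite_and]
    refine if_congr ⟨?_, ?_⟩ rfl rfl <;>
      exact fun ⟨⟨_, hyδ⟩, hαx, _⟩ => ⟨⟨by linarith, hyδ⟩, hαx, by linarith⟩

lemma toShift_comp_toShift (ε : ℝ≥0) (hγ : γ ≤ α + ε) (hδ : δ ≤ β + ε) (hα : α ≤ γ + ε)
    (hβ : β ≤ δ + ε) (x : ℝ≥0) :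
    ((toShift ε hα hβ).app (x + ε)).comp ((toShift ε hγ hδ).app x) =
      (intervalModule α β).map (le_self_add.trans le_self_add : x ≤ x + ε + ε) := by
  ext v
  apply Subtype.ext
  refine ((toShiftApp_apply_val ε hα (x + ε) _).trans ?_).trans (map_apply_val _ v).symm
  -- the inner value was unified at type `(intervalModule γ δ).V (x + ε)`; retype it as an
  -- element of the shifted module so that `toShiftApp_apply_val` matches
  show (if _ then (toShiftApp ε hγ x v).1 else 0) = _
  rw [toShiftApp_apply_val, ← ite_and]
  push_cast
  refine if_congr ⟨?_, ?_⟩ rfl rfl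
  · rintro ⟨⟨-, hxβ⟩, hαx, -⟩
    exact ⟨hαx, hxβ⟩
  · rintro ⟨hαx, hxβ⟩
    exact ⟨⟨by linarith, hxβ⟩, hαx, by linarith⟩

lemma isInterleaving_toShift (ε : ℝ≥0) (hγ : γ ≤ α + ε) (hδ : δ ≤ β + ε) (hα : α ≤ γ + ε)
    (hβ : β ≤ δ + ε) :
    IsInterleaving (intervalModule α β) (intervalModule γ δ) ε (toShift ε hγ hδ)
      (toShift ε hα hβ) :=
  ⟨toShift_comp_toShift ε hγ hδ hα hβ, toShift_comp_toShift ε hα hβ hγ hδ⟩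

end intervalModule

theorem stmt11_general (a b c d D : ℝ) (hab : a < b) (hne : ¬(a = c ∧ b = d))
    (hD : D = min (max |a - c| |b - d|) (max ((b - a) / 2) ((d - c) / 2))) :
    0 < D ∧ ∃ Φ Ψ, IsInterleaving (intervalModule a b) (intervalModule c d) D.toNNReal Φ Ψ := by
  have hD_pos : 0 < D := by
    rw [hD, lt_min_iff, lt_max_iff, lt_max_iff, abs_pos, abs_pos, sub_ne_zero, sub_ne_zero]
    exact ⟨by tauto, by left; linarith⟩
  refine ⟨hD_pos, ?_⟩
  have hε : ((D.toNNReal : ℝ≥0) : ℝ) = D := Real.coe_toNNReal D hD_pos.le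
  rcases min_choice (max |a - c| |b - d|) (max ((b - a) / 2) ((d - c) / 2)) with h | h <;>
    rw [h] at hD
  · have hac : |a - c| ≤ D := hD ▸ le_max_left _ _
    have hbd : |b - d| ≤ D := hD ▸ le_max_right _ _
    rw [abs_sub_le_iff] at hac hbd
    exact ⟨_, _, intervalModule.isInterleaving_toShift D.toNNReal (by linarith) (by linarith)
      (by linarith) (by linarith)⟩
  · have hba : (b - a) / 2 ≤ D := hD ▸ le_max_left _ _
    have hdc : (d - c) / 2 ≤ D := hD ▸ le_max_right _ _
    exact ⟨0, 0, isInterleaving_zero (intervalModule.map_add_add_eq_zero (by linarith))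
      (intervalModule.map_add_add_eq_zero (by linarith))⟩

theorem stmt11 (a b c d D : ℝ) (ha : 0 ≤ a) (hab : a < b) (hc : 0 ≤ c) (hcd : c < d) (hne : ¬(a = c ∧ b = d))
    (hD : D = min (max |a - c| |b - d|) (max ((b - a) / 2) ((d - c) / 2))) :
    0 < D ∧ ∃ Φ Ψ, IsInterleaving (intervalModule a b) (intervalModule c d) D.toNNReal Φ Ψ :=
  stmt11_general a b c d D hab hne hD
end

section
/- Let M = [a,b) and N = [c,d) be interval modules (0 ≤ a < b, 0 ≤ c < d). If 0 < ε < min{ max{|a−c|,|b−d|}, max{(b−a)/2,(d−c)/2} }, then there is no ε-interleaving between M and N. -/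
/-! If `Φ, Ψ` is an `ε`-interleaving of `M = [a,b)` and `N = [c,d)` and `[x, x + 2ε] ⊆ [a,b)`,
then the nonzero map `M(x ≤ x + 2ε) = Ψ(x + ε) ∘ Φ(x)` factors through `N(x + ε)`, so
`x + ε ∈ [c,d)`. If `b - a > 2ε` this says `[a + ε, b - ε) ⊆ [c,d)`, i.e. `c ≤ a + ε` and
`b ≤ d + ε`. The reverse inequalities come from the same argument with `M` and `N` swapped when
`d - c > 2ε`, and from `d - c ≤ 2ε` otherwise. So `max |a - c| |b - d| ≤ ε`. -/

open scoped NNReal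

theorem IsInterleaving.symm {M N : PM} {ε : ℝ≥0} {Φ : M.Hom (N.shift ε)} {Ψ : N.Hom (M.shift ε)}
    (h : IsInterleaving M N ε Φ Ψ) : IsInterleaving N M ε Ψ Φ :=
  ⟨h.2, h.1⟩

theorem IsInterleaving.map_eq_zero {M N : PM} {ε : ℝ≥0} {Φ : M.Hom (N.shift ε)}
    {Ψ : N.Hom (M.shift ε)} (h : IsInterleaving M N ε Φ Ψ) (x : ℝ≥0)
    [Subsingleton (N.V (x + ε))] :
    M.map (le_self_add.trans le_self_add : x ≤ x + ε + ε) = 0 := by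
  rw [← h.1 x]
  ext v
  exact (congrArg (Ψ.app (x + ε)) (Subsingleton.elim (α := N.V (x + ε)) _ 0)).trans
    (map_zero _)

theorem intervalModule_subsingleton {α β : ℝ} {x : ℝ≥0} (hx : ¬(α ≤ (x : ℝ) ∧ (x : ℝ) < β)) :
    Subsingleton ((intervalModule α β).V x) := by
  change Subsingleton (intervalSub α β x)
  rw [intervalSub, if_neg hx]
  infer_instance

theorem intervalModule_map_ne_zero {α β : ℝ} {x y : ℝ≥0} (hxy : x ≤ y) (hαx : α ≤ (x : ℝ))
    (hyβ : (y : ℝ) < β) : (intervalModule α β).map hxy ≠ 0 := by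
  have hx : intervalSub α β x = ⊤ := if_pos ⟨hαx, (NNReal.coe_le_coe.2 hxy).trans_lt hyβ⟩
  intro h
  have h1 := congrArg (fun f => (f ⟨1, hx ▸ Submodule.mem_top⟩).1) h
  simp only [intervalModule, if_pos (And.intro hαx hyβ), one_smul] at h1
  exact one_ne_zero h1

theorem IsInterleaving.add_mem_Ico {a b c d : ℝ} {ε : ℝ≥0}
    {Φ : (intervalModule a b).Hom ((intervalModule c d).shift ε)}
    {Ψ : (intervalModule c d).Hom ((intervalModule a b).shift ε)}
    (h : IsInterleaving (intervalModule a b) (intervalModule c d) ε Φ Ψ) {x : ℝ} (hx : 0 ≤ x)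
    (hax : a ≤ x) (hxb : x + 2 * ε < b) : x + ε ∈ Set.Ico c d := by
  lift x to ℝ≥0 using hx
  by_contra hmid
  have : Subsingleton ((intervalModule c d).V (x + ε)) :=
    intervalModule_subsingleton (by push_cast; exact hmid)
  exact intervalModule_map_ne_zero _ hax (by push_cast; linarith) (h.map_eq_zero x)

theorem le_add_and_le_add_of_forall_add_mem_Ico {a b c d ε : ℝ} (ha : 0 ≤ a)
    (hab : 2 * ε < b - a)
    (h : ∀ x, 0 ≤ x → a ≤ x → x + 2 * ε < b → x + ε ∈ Set.Ico c d) :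
    c ≤ a + ε ∧ b ≤ d + ε := by
  refine ⟨(h a ha le_rfl (by linarith)).1, ?_⟩
  by_contra! hdb
  have hlt : max a (d - ε) < b - 2 * ε := max_lt (by linarith) (by linarith)
  have hx := h (max a (d - ε)) (ha.trans (le_max_left _ _)) (le_max_left _ _) (by linarith)
  linarith [hx.2, le_max_right a (d - ε)]

theorem max_abs_sub_le_of_forall_add_mem_Ico {a b c d ε : ℝ} (ha : 0 ≤ a) (hc : 0 ≤ c)
    (hlen : 2 * ε < b - a ∨ 2 * ε < d - c)
    (hMN : ∀ x, 0 ≤ x → a ≤ x → x + 2 * ε < b → x + ε ∈ Set.Ico c d)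
    (hNM : ∀ x, 0 ≤ x → c ≤ x → x + 2 * ε < d → x + ε ∈ Set.Ico a b) :
    max |a - c| |b - d| ≤ ε := by
  rw [max_le_iff, abs_sub_le_iff, abs_sub_le_iff]
  by_cases hb : 2 * ε < b - a <;> by_cases hd : 2 * ε < d - c
  · obtain ⟨hca, hbd⟩ := le_add_and_le_add_of_forall_add_mem_Ico ha hb hMN
    obtain ⟨hac, hdb⟩ := le_add_and_le_add_of_forall_add_mem_Ico hc hd hNM
    exact ⟨⟨by linarith, by linarith⟩, by linarith, by linarith⟩
  · obtain ⟨hca, hbd⟩ := le_add_and_le_add_of_forall_add_mem_Ico ha hb hMN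
    exact ⟨⟨by linarith, by linarith⟩, by linarith, by linarith⟩
  · obtain ⟨hac, hdb⟩ := le_add_and_le_add_of_forall_add_mem_Ico hc hd hNM
    exact ⟨⟨by linarith, by linarith⟩, by linarith, by linarith⟩
  · exact (hlen.elim hb hd).elim

theorem stmt12_general (a b c d ε : ℝ) (ha : 0 ≤ a) (hc : 0 ≤ c) (hε : 0 < ε)
    (hlt : ε < min (max |a - c| |b - d|) (max ((b - a) / 2) ((d - c) / 2))) :
    ¬ ∃ Φ Ψ, IsInterleaving (intervalModule a b) (intervalModule c d) ε.toNNReal Φ Ψ := by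
  rintro ⟨Φ, Ψ, h⟩
  have hε' : ((ε.toNNReal : ℝ≥0) : ℝ) = ε := Real.coe_toNNReal _ hε.le
  have hlen : 2 * ε < b - a ∨ 2 * ε < d - c := by
    rcases lt_max_iff.1 (hlt.trans_le (min_le_right _ _)) with h | h
    exacts [.inl (by linarith), .inr (by linarith)]
  have hdist := max_abs_sub_le_of_forall_add_mem_Ico ha hc hlen
    (fun x hx hax hxb => hε' ▸ h.add_mem_Ico hx hax (by rwa [hε']))
    (fun x hx hcx hxd => hε' ▸ h.symm.add_mem_Ico hx hcx (by rwa [hε']))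
  exact (hlt.trans_le (min_le_left _ _)).not_ge hdist

theorem stmt12 (a b c d ε : ℝ) (ha : 0 ≤ a) (hab : a < b) (hc : 0 ≤ c) (hcd : c < d) (hε : 0 < ε)
    (hlt : ε < min (max |a - c| |b - d|) (max ((b - a) / 2) ((d - c) / 2))) :
    ¬ ∃ Φ Ψ, IsInterleaving (intervalModule a b) (intervalModule c d) ε.toNNReal Φ Ψ :=
  stmt12_general a b c d ε ha hc hε hlt
end
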